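/- arXiv:1911.09069 — 2 statements merged into one kernel-verified Lean document; each statement's English description precedes it below -/
import Mathlib

section
/- Let Q be a clique separator of G⁺ (the pendant extension of G). Then no pendant vertex v⁺ lies in Q unless Q = {v, v⁺}; and if Q = {v, v⁺} then the Q-attachedness graph of G⁺ has no antipodal edges at all. -/
namespace PathGraphs

variable {V : Type*}

/-- `K` is a maximal clique of the subgraph of `G` induced by `A`. -/
def IsMaxCliqueIn (G : SimpleGraph V) (A K : Set V) : Prop :=
  K ⊆ A ∧ G.IsClique K ∧ ∀ K' : Set V, K' ⊆ A → G.IsClique K' → K ⊆ K' → K' = K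

/-- `Q` is a clique separator of `G`: a maximal clique whose removal disconnects `G`. -/
def IsCliqueSeparator (G : SimpleGraph V) (Q : Set V) : Prop :=
  IsMaxCliqueIn G Set.univ Q ∧
  ∃ a b : (Qᶜ : Set V), ¬ (G.induce (Qᶜ : Set V)).Reachable a b

/-- `C` is (the vertex set of) a connected component of `G - Q`; the corresponding
member of `Γ_Q` is the induced subgraph `G[C ∪ Q]`. -/
def InGamma (G : SimpleGraph V) (Q C : Set V) : Prop :=
  ∃ v : (Qᶜ : Set V),
    C = {w : V | ∃ h : w ∈ (Qᶜ : Set V), (G.induce (Qᶜ : Set V)).Reachable v ⟨w, h⟩}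

/-- `K` is a relevant clique of the member `γ = G[C ∪ Q]` of `Γ_Q`. -/
def RelCl (G : SimpleGraph V) (Q C K : Set V) : Prop :=
  IsMaxCliqueIn G (C ∪ Q) K ∧ (K ∩ Q).Nonempty ∧ K ≠ Q

/-- `γ = G[C ∪ Q]` is a neighboring subgraph of the vertex `v`. -/
def NbrOf (G : SimpleGraph V) (Q C : Set V) (v : V) : Prop :=
  ∃ K, RelCl G Q C K ∧ v ∈ K

/-- Attachedness `γ ⋈ γ'`. -/
def Att (G : SimpleGraph V) (Q C C' : Set V) : Prop :=
  ∃ K K', RelCl G Q C K ∧ RelCl G Q C' K' ∧ (K ∩ K' ∩ Q).Nonempty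

/-- Dominance `γ ≤ γ'` (`C` is dominated by `C'`). -/
def Dom (G : SimpleGraph V) (Q C C' : Set V) : Prop :=
  Att G Q C C' ∧ ∀ K', RelCl G Q C' K' →
    (∀ K, RelCl G Q C K → K ∩ Q ⊆ K' ∩ Q) ∨ (∀ K, RelCl G Q C K → K ∩ K' ∩ Q = ∅)

/-- Antipodality `γ ↔ γ'`. -/
def Antip (G : SimpleGraph V) (Q C C' : Set V) : Prop :=
  ∃ K K', RelCl G Q C K ∧ RelCl G Q C' K' ∧ (K ∩ K' ∩ Q).Nonempty ∧
    ¬ K ∩ Q ⊆ K' ∩ Q ∧ ¬ K' ∩ Q ⊆ K ∩ Q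

/-- `{A, B, C}` is a neighboring triple of `Γ_Q`. -/
def NbrTriple (G : SimpleGraph V) (Q A B C : Set V) : Prop :=
  InGamma G Q A ∧ InGamma G Q B ∧ InGamma G Q C ∧ A ≠ B ∧ A ≠ C ∧ B ≠ C ∧
    ∃ v ∈ Q, NbrOf G Q A v ∧ NbrOf G Q B v ∧ NbrOf G Q C v

/-- `{A, B, C}` is a full antipodal triple. -/
def FullAntTriple (G : SimpleGraph V) (Q A B C : Set V) : Prop :=
  NbrTriple G Q A B C ∧ Antip G Q A B ∧ Antip G Q A C ∧ Antip G Q B C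

/-- `U` is an upper bound: a `≤`-maximal element of `Γ_Q`. -/
def IsUpper (G : SimpleGraph V) (Q U : Set V) : Prop :=
  InGamma G Q U ∧ ∀ C, InGamma G Q C → Dom G Q U C → C = U

/-- `Upper_Q` contains no full antipodal triple. -/
def NoFullAntTripleInUpper (G : SimpleGraph V) (Q : Set V) : Prop :=
  ¬ ∃ A B C, IsUpper G Q A ∧ IsUpper G Q B ∧ IsUpper G Q C ∧ FullAntTriple G Q A B C

/-- The dominance relation is antisymmetric on `Γ_Q` (the paper's standing assumption
that `(Γ_Q, ≤)` is a partial order, i.e. `Γ_Q = Γ_Q/∼`). -/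
def DomAntisymm (G : SimpleGraph V) (Q : Set V) : Prop :=
  ∀ C C', InGamma G Q C → InGamma G Q C' → Dom G Q C C' → Dom G Q C' C → C = C'

/-- `u` enumerates `Upper_Q` injectively. -/
def UpperEnum (G : SimpleGraph V) (Q : Set V) {ℓ : ℕ} (u : Fin ℓ → Set V) : Prop :=
  Function.Injective u ∧ ∀ U, IsUpper G Q U ↔ ∃ i, U = u i

/-- `C ∈ D_i`: dominated by `u i` and by no other upper bound. -/
def Dmem (G : SimpleGraph V) (Q : Set V) {ℓ : ℕ} (u : Fin ℓ → Set V) (i : Fin ℓ)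
    (C : Set V) : Prop :=
  InGamma G Q C ∧ Dom G Q C (u i) ∧ ∀ k, k ≠ i → ¬ Dom G Q C (u k)

/-- `C ∈ D_{i,j}`: dominated exactly by the upper bounds `u i` and `u j`. -/
def Dmem2 (G : SimpleGraph V) (Q : Set V) {ℓ : ℕ} (u : Fin ℓ → Set V) (i j : Fin ℓ)
    (C : Set V) : Prop :=
  InGamma G Q C ∧ Dom G Q C (u i) ∧ Dom G Q C (u j) ∧
    ∀ k, k ≠ i → k ≠ j → ¬ Dom G Q C (u k)

/-- A strong `Q`-coloring of `G`. -/
def StrongColoring (G : SimpleGraph V) (Q : Set V) (f : Set V → ℕ) : Prop :=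
  (∀ C C', InGamma G Q C → InGamma G Q C' → Antip G Q C C' → f C ≠ f C') ∧
  (∀ A B C, NbrTriple G Q A B C → f A = f B ∨ f A = f C ∨ f B = f C)

/-- `C` and `C'` lie in the same member of the `Q`-skeleton. -/
def SameMember (G : SimpleGraph V) (Q : Set V) {ℓ : ℕ} (u : Fin ℓ → Set V)
    (C C' : Set V) : Prop :=
  (∃ i, Dmem G Q u i C ∧ Dmem G Q u i C') ∨
  (∃ i j, i ≠ j ∧ Dmem2 G Q u i j C ∧ Dmem2 G Q u i j C')

/-- `C` is a vertex of `H^cross`: it is incident to a cross antipodal edge. -/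
def CrossVert (G : SimpleGraph V) (Q : Set V) {ℓ : ℕ} (u : Fin ℓ → Set V)
    (C : Set V) : Prop :=
  InGamma G Q C ∧ ∃ C', InGamma G Q C' ∧ Antip G Q C C' ∧ ¬ SameMember G Q u C C'

/-- The pendant extension `G⁺` of `G`. -/
def pendant (G : SimpleGraph V) : SimpleGraph (V ⊕ V) :=
  SimpleGraph.fromRel (fun x y =>
    match x, y with
    | .inl a, .inl b => G.Adj a b
    | .inl a, .inr b => a = b
    | _, _ => False)

/-- The set `S` induces a path in the graph `T`: the induced subgraph is connected
and every vertex has at most two neighbors inside `S`. -/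
def InducesPath {α : Type*} (T : SimpleGraph α) (S : Set α) : Prop :=
  (T.induce S).Connected ∧ ∀ a ∈ S, ({b ∈ S | T.Adj a b}).encard ≤ 2

/-- `G` is a path graph: it admits a clique path tree (Gavril). -/
def IsPathGraph (G : SimpleGraph V) : Prop :=
  ∃ T : SimpleGraph {K : Set V // IsMaxCliqueIn G Set.univ K},
    T.Connected ∧ T.IsAcyclic ∧
    ∀ v : V, InducesPath T {K | v ∈ K.1}

/-- From the proof of Lemma 4.2 (`lemma:g+`): in `G⁺`, no pendant vertex `v⁺` lies in
a clique separator `Q` unless `Q = {v, v⁺}`; and if `Q = {v, v⁺}` then the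
`Q`-attachedness graph of `G⁺` has no antipodal edges at all. -/
theorem pendant_separator_structure {V : Type*} (G : SimpleGraph V)
    (Q : Set (V ⊕ V)) (hQ : IsCliqueSeparator (pendant G) Q) :
    (∀ v : V, Sum.inr v ∈ Q → Q = {Sum.inl v, Sum.inr v}) ∧
    (∀ v : V, Q = {Sum.inl v, Sum.inr v} →
      ∀ C C', InGamma (pendant G) Q C → InGamma (pendant G) Q C' →
        ¬ Antip (pendant G) Q C C') := by
  obtain ⟨⟨hQsub, hQcl, hQmax⟩, -⟩ := hQ
  -- any clique containing `inr v` is within `{inl v, inr v}`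
  have key : ∀ (v : V) (K : Set (V ⊕ V)), (pendant G).IsClique K → Sum.inr v ∈ K →
      K ⊆ {Sum.inl v, Sum.inr v} := by
    intro v K hK hvK x hx
    by_cases hxe : x = Sum.inr v
    · exact Or.inr hxe
    · have hadj : (pendant G).Adj x (Sum.inr v) := hK hx hvK hxe
      rw [pendant, SimpleGraph.fromRel_adj] at hadj
      obtain ⟨-, h | h⟩ := hadj
      · cases x with
        | inl a => simp only at h; exact Or.inl (by rw [h])
        | inr a => simp at h
      · cases x <;> simp at h
  have pairclique : ∀ v : V, (pendant G).IsClique {Sum.inl v, Sum.inr v} := by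
    intro v
    rw [SimpleGraph.isClique_pair]
    intro _
    rw [pendant, SimpleGraph.fromRel_adj]
    exact ⟨by simp, Or.inl rfl⟩
  have part1 : ∀ v : V, Sum.inr v ∈ Q → Q = {Sum.inl v, Sum.inr v} := by
    intro v hv
    have hsub : Q ⊆ {Sum.inl v, Sum.inr v} := key v Q hQcl hv
    have := hQmax {Sum.inl v, Sum.inr v} (Set.subset_univ _) (pairclique v) hsub
    exact this.symm
  refine ⟨part1, ?_⟩
  intro v hQeq C C' hC hC' hant
  obtain ⟨K, K', hK, hK', hne, hns, hns'⟩ := hant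
  -- any relevant clique K has K ∩ Q = {inl v}
  have relcl_inter : ∀ D K₀ : Set (V ⊕ V), RelCl (pendant G) Q D K₀ →
      K₀ ∩ Q = {Sum.inl v} := by
    intro D K₀ ⟨⟨hKsub, hKcl, hKmax⟩, hKQ, hKne⟩
    have hinr : Sum.inr v ∉ K₀ := by
      intro hmem
      have hsub : K₀ ⊆ Q := by rw [hQeq]; exact key v K₀ hKcl hmem
      have hQsub' : Q ⊆ D ∪ Q := Set.subset_union_right
      have := hKmax Q hQsub' hQcl hsub
      exact hKne this.symm
    have hinl : Sum.inl v ∈ K₀ := by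
      obtain ⟨x, hxK, hxQ⟩ := hKQ
      rw [hQeq] at hxQ
      rcases hxQ with h | h
      · rwa [← h]
      · exact absurd (h ▸ hxK) hinr
    apply Set.Subset.antisymm
    · intro x ⟨hxK, hxQ⟩
      rw [hQeq] at hxQ
      rcases hxQ with h | h
      · exact h
      · exact absurd (h ▸ hxK) hinr
    · intro x hx
      rw [Set.mem_singleton_iff] at hx
      subst hx
      exact ⟨hinl, by rw [hQeq]; exact Or.inl rfl⟩
  have h1 := relcl_inter C K hK
  have h2 := relcl_inter C' K' hK'
  exact hns (by rw [h1, h2])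

end PathGraphs
end

section
/- Let Q be a clique separator of G⁺ and M the Q-attachedness graph of G⁺. Then M has no full antipodal triangle and no induced copy of the wheel W₃⁽⁰⁾ if and only if M has no induced copy of W₃⁽⁰⁾; equivalently, if M has a full antipodal triangle, then M contains an induced copy of W₃⁽⁰⁾. -/
namespace PathGraphs

variable {V : Type*}

section Helpers

variable {G : SimpleGraph V}

lemma pendant_adj_inr {x : V ⊕ V} {z : V} :
    (pendant G).Adj x (Sum.inr z) ↔ x = Sum.inl z := by
  rw [pendant, SimpleGraph.fromRel_adj]
  constructor
  · rintro ⟨hne, h | h⟩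
    · cases x <;> simp_all
    · simp at h
  · rintro rfl
    exact ⟨by simp, Or.inl rfl⟩

lemma pair_isClique {z : V} :
    (pendant G).IsClique ({Sum.inl z, Sum.inr z} : Set (V ⊕ V)) := by
  intro a ha b hb hne
  simp only [Set.mem_insert_iff, Set.mem_singleton_iff] at ha hb
  rcases ha with rfl | rfl <;> rcases hb with rfl | rfl
  · exact absurd rfl hne
  · exact (pendant_adj_inr (G := G)).mpr rfl
  · exact ((pendant_adj_inr (G := G)).mpr rfl).symm
  · exact absurd rfl hne

lemma clique_subset_pair {K : Set (V ⊕ V)} {z : V}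
    (hK : (pendant G).IsClique K) (hz : Sum.inr z ∈ K) :
    K ⊆ {Sum.inl z, Sum.inr z} := by
  intro w hw
  rcases eq_or_ne w (Sum.inr z) with rfl | hne
  · exact Or.inr rfl
  · exact Or.inl (pendant_adj_inr.mp (hK hw hz hne))

lemma relcl_not_subset_Q {Q C K : Set (V ⊕ V)}
    (hQ : (pendant G).IsClique Q) (hK : RelCl (pendant G) Q C K) : ¬ K ⊆ Q :=
  fun h => hK.2.2 (hK.1.2.2 Q Set.subset_union_right hQ h).symm

lemma nbr_vertex_not_inr {Q C : Set (V ⊕ V)}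
    (hQmax : IsMaxCliqueIn (pendant G) Set.univ Q)
    {z : V} (hv : Sum.inr z ∈ Q) {K : Set (V ⊕ V)} (hK : RelCl (pendant G) Q C K)
    (hvK : Sum.inr z ∈ K) : False := by
  have hQsub : Q ⊆ {Sum.inl z, Sum.inr z} := clique_subset_pair hQmax.2.1 hv
  have hKsub : K ⊆ {Sum.inl z, Sum.inr z} := clique_subset_pair hK.1.2.1 hvK
  have hcl : (pendant G).IsClique (K ∪ Q) :=
    pair_isClique.subset (Set.union_subset hKsub hQsub)
  have h1 : K ∪ Q = K :=
    hK.1.2.2 (K ∪ Q) (Set.union_subset hK.1.1 Set.subset_union_right) hcl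
      Set.subset_union_left
  have h2 : K ∪ Q = Q :=
    hQmax.2.2 (K ∪ Q) (Set.subset_univ _) hcl Set.subset_union_right
  have hKQ : K ⊆ Q := fun x hx => h2 ▸ Set.mem_union_left Q hx
  have hQK : Q ⊆ K := fun x hx => h1 ▸ Set.mem_union_right K hx
  exact hK.2.2 (Set.Subset.antisymm hKQ hQK)

end Helpers

/-- Lemma 4.2 (`lemma:g+`): if the `Q`-attachedness graph of `G⁺` has a full antipodal
triangle, then it contains an induced copy of `W₃⁽⁰⁾`: three pairwise antipodal rim
vertices together with a hub joined to each of them by a dominance edge. -/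
theorem fullAntTriangle_gives_W3 {V : Type*} (G : SimpleGraph V)
    (Q : Set (V ⊕ V)) (hQ : IsCliqueSeparator (pendant G) Q)
    (hfull : ∃ A B C, FullAntTriple (pendant G) Q A B C) :
    ∃ η A B C : Set (V ⊕ V),
      InGamma (pendant G) Q η ∧ InGamma (pendant G) Q A ∧
      InGamma (pendant G) Q B ∧ InGamma (pendant G) Q C ∧
      η ≠ A ∧ η ≠ B ∧ η ≠ C ∧ A ≠ B ∧ A ≠ C ∧ B ≠ C ∧
      Antip (pendant G) Q A B ∧ Antip (pendant G) Q A C ∧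
      Antip (pendant G) Q B C ∧
      (Att (pendant G) Q η A ∧ ¬ Antip (pendant G) Q η A) ∧
      (Att (pendant G) Q η B ∧ ¬ Antip (pendant G) Q η B) ∧
      (Att (pendant G) Q η C ∧ ¬ Antip (pendant G) Q η C) := by
  obtain ⟨A, B, C, hT, hAB, hAC, hBC⟩ := hfull
  obtain ⟨hgA, hgB, hgC, hneAB, hneAC, hneBC, v, hvQ, hNA, hNB, hNC⟩ := hT
  obtain ⟨hQmax, -⟩ := hQ
  -- the common vertex is an original (non-pendant) vertex `inl z`
  obtain ⟨z, rfl⟩ : ∃ z, v = Sum.inl z := by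
    cases v with
    | inl z => exact ⟨z, rfl⟩
    | inr z =>
      obtain ⟨K, hK, hvK⟩ := hNA
      exact (nbr_vertex_not_inr hQmax hvQ hK hvK).elim
  -- the pendant vertex `inr z` is not in `Q`
  have hzQc : Sum.inr z ∉ Q := by
    intro hmem
    have hQsub : Q ⊆ {Sum.inl z, Sum.inr z} := clique_subset_pair hQmax.2.1 hmem
    obtain ⟨K, K', hK, hK', ⟨x, hx⟩, hns, hns'⟩ := hAB
    obtain ⟨a, ha, haS⟩ := Set.not_subset.mp hns
    obtain ⟨b, hb, hbS⟩ := Set.not_subset.mp hns'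
    have hxK : x ∈ K ∩ Q := ⟨hx.1.1, hx.2⟩
    have hxK' : x ∈ K' ∩ Q := ⟨hx.1.2, hx.2⟩
    have hane : a ≠ b := fun h => haS (h ▸ hb)
    have hap := hQsub ha.2
    have hbp := hQsub hb.2
    have hxp := hQsub hx.2
    simp only [Set.mem_insert_iff, Set.mem_singleton_iff] at hap hbp hxp
    have hxab : x = a ∨ x = b := by
      rcases hap with ha' | ha' <;> rcases hbp with hb' | hb' <;>
        rcases hxp with hx' | hx'
      all_goals first
        | (exact absurd (ha'.trans hb'.symm) hane)
        | (exact Or.inl (hx'.trans ha'.symm))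
        | (exact Or.inr (hx'.trans hb'.symm))
    rcases hxab with rfl | rfl
    · exact haS hxK'
    · exact hbS hxK
  -- the component of the pendant vertex: η = {inr z}
  set η : Set (V ⊕ V) := {Sum.inr z} with hηdef
  have hreach : ∀ w (h : w ∈ (Qᶜ : Set (V ⊕ V))),
      ((pendant G).induce (Qᶜ : Set (V ⊕ V))).Reachable ⟨Sum.inr z, hzQc⟩ ⟨w, h⟩ →
        w = Sum.inr z := by
    intro w h hr
    obtain ⟨p⟩ := hr
    cases p with
    | nil => rfl
    | @cons _ b _ hadj p' =>
      have hadj' : (pendant G).Adj (Sum.inr z) b.1 := hadj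
      have : b.1 = Sum.inl z := pendant_adj_inr.mp hadj'.symm
      exact absurd (this ▸ hvQ) b.2
  have hηGamma : InGamma (pendant G) Q η := by
    refine ⟨⟨Sum.inr z, hzQc⟩, ?_⟩
    ext w
    simp only [hηdef, Set.mem_singleton_iff, Set.mem_setOf_eq]
    constructor
    · rintro rfl
      exact ⟨hzQc, SimpleGraph.Reachable.refl _⟩
    · rintro ⟨h, hr⟩
      exact hreach w h hr
  -- the relevant clique of η
  have hK0 : RelCl (pendant G) Q η ({Sum.inl z, Sum.inr z} : Set (V ⊕ V)) := by
    refine ⟨⟨?_, pair_isClique, ?_⟩, ⟨Sum.inl z, Set.mem_insert _ _, hvQ⟩, ?_⟩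
    · rintro w (rfl | rfl)
      · exact Or.inr hvQ
      · exact Or.inl rfl
    · intro K' _ hcl hsub
      exact Set.Subset.antisymm
        (clique_subset_pair hcl (hsub (Or.inr rfl))) hsub
    · intro h
      exact hzQc (h ▸ Or.inr rfl)
  -- every relevant clique of η meets Q only in inl z
  have hηcl : ∀ K, RelCl (pendant G) Q η K → K ∩ Q ⊆ {Sum.inl z} := by
    intro K hK
    have hinr : Sum.inr z ∈ K := by
      by_contra h
      refine relcl_not_subset_Q hQmax.2.1 hK (fun w hw => ?_)
      rcases hK.1.1 hw with hw' | hw'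
      · exact absurd hw (hw' ▸ h)
      · exact hw'
    rintro w ⟨hwK, hwQ⟩
    rcases clique_subset_pair hK.1.2.1 hinr hwK with h | h
    · exact h
    · exact absurd (h ▸ hwQ) hzQc
  -- η differs from anything involved in an antipodal pair
  have hne : ∀ X Y, Antip (pendant G) Q X Y → η ≠ X ∧ η ≠ Y := by
    rintro X Y ⟨K, K', hK, hK', ⟨x, hx⟩, hns, hns'⟩
    constructor
    · rintro rfl
      apply hns
      intro w hw
      have hxe : x = Sum.inl z := hηcl K hK ⟨hx.1.1, hx.2⟩
      have hwe : w = Sum.inl z := hηcl K hK hw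
      rw [hwe, ← hxe]
      exact ⟨hx.1.2, hx.2⟩
    · rintro rfl
      apply hns'
      intro w hw
      have hxe : x = Sum.inl z := hηcl K' hK' ⟨hx.1.2, hx.2⟩
      have hwe : w = Sum.inl z := hηcl K' hK' hw
      rw [hwe, ← hxe]
      exact ⟨hx.1.1, hx.2⟩
  -- η is attached but not antipodal to every neighboring subgraph of inl z
  have hmain : ∀ X, NbrOf (pendant G) Q X (Sum.inl z) →
      Att (pendant G) Q η X ∧ ¬ Antip (pendant G) Q η X := by
    rintro X ⟨K', hK', hvK'⟩
    refine ⟨⟨_, K', hK0, hK',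
      ⟨Sum.inl z, ⟨⟨Set.mem_insert _ _, hvK'⟩, hvQ⟩⟩⟩, ?_⟩
    rintro ⟨K, K'', hK, hK'', ⟨x, hx⟩, hns, hns'⟩
    apply hns
    intro w hw
    have hxe : x = Sum.inl z := hηcl K hK ⟨hx.1.1, hx.2⟩
    have hwe : w = Sum.inl z := hηcl K hK hw
    rw [hwe, ← hxe]
    exact ⟨hx.1.2, hx.2⟩
  exact ⟨η, A, B, C, hηGamma, hgA, hgB, hgC,
    (hne A B hAB).1, (hne A B hAB).2, (hne A C hAC).2,
    hneAB, hneAC, hneBC, hAB, hAC, hBC,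
    hmain A hNA, hmain B hNB, hmain C hNC⟩

end PathGraphs
end
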